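/- arXiv:1905.10775 — 4 statements merged into one kernel-verified Lean document; each statement's English description precedes it below -/
import Mathlib

section
/- Let G be a finite connected graph and S a dominating set of G. Define the graph G_S on vertex set S where two distinct vertices u, v ∈ S are adjacent if and only if their distance in G is at most 3. Then G_S is connected. -/
/-- The graph `G_S` on a dominating set `S`: two distinct vertices of `S`
are adjacent iff their distance in `G` is positive (they are reachable from
each other) and at most `3`. -/
def domGraph {V : Type*} (G : SimpleGraph V) (S : Set V) : SimpleGraph S where
  Adj u v := u ≠ v ∧ G.Reachable u.1 v.1 ∧ G.dist u.1 v.1 ≤ 3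
  symm := ⟨fun u v h => ⟨h.1.symm, h.2.1.symm, by rw [SimpleGraph.dist_comm]; exact h.2.2⟩⟩
  loopless := ⟨fun u h => h.1 rfl⟩

/-!
Every vertex of `G` lies within distance `1` of some vertex of `S`. Walking along a `G`-path
from `u ∈ S` to `v ∈ S` and choosing such a dominator for each vertex of the path, consecutive
dominators are at distance at most `1 + 1 + 1 = 3`, hence equal or adjacent in `G_S`.
-/

open SimpleGraph

section

variable {V : Type*} {G : SimpleGraph V} {S : Set V}

lemma exists_mem_dist_le_one_of_dominating (hdom : ∀ v : V, v ∈ S ∨ ∃ u ∈ S, G.Adj u v)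
    (v : V) : ∃ u ∈ S, G.dist u v ≤ 1 := by
  rcases hdom v with hv | ⟨u, hu, huv⟩
  · exact ⟨v, hv, by simp⟩
  · exact ⟨u, hu, (dist_eq_one_iff_adj.mpr huv).le⟩

lemma domGraph_reachable_of_dist_le_three (hconn : G.Connected) {u v : S}
    (h : G.dist u v ≤ 3) : (domGraph G S).Reachable u v := by
  by_cases huv : u = v
  · exact huv ▸ Reachable.refl u
  · exact Adj.reachable ⟨huv, hconn u v, h⟩

lemma domGraph_reachable_of_walk (hconn : G.Connected)
    (hdom : ∀ v : V, v ∈ S ∨ ∃ u ∈ S, G.Adj u v) {w v : V} (p : G.Walk w v) (hv : v ∈ S)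
    {s : S} (hs : G.dist s w ≤ 1) : (domGraph G S).Reachable s ⟨v, hv⟩ := by
  induction p generalizing s with
  | nil => exact domGraph_reachable_of_dist_le_three hconn (hs.trans (by norm_num))
  | @cons a b _ hab _ ih =>
    obtain ⟨t, ht, htb⟩ := exists_mem_dist_le_one_of_dominating hdom b
    have hst : G.dist s t ≤ 3 := by
      have hab' := (dist_eq_one_iff_adj.mpr hab).le
      have := hconn.dist_triangle (u := (s : V)) (v := a) (w := b)
      have := hconn.dist_triangle (u := (s : V)) (v := b) (w := t)
      rw [dist_comm (u := b)] at this
      omega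
    exact (domGraph_reachable_of_dist_le_three (v := ⟨t, ht⟩) hconn hst).trans
      (ih hv htb)

end

theorem stmt2_general {V : Type*} (G : SimpleGraph V) (hconn : G.Connected)
    (S : Set V) (hdom : ∀ v : V, v ∈ S ∨ ∃ u ∈ S, G.Adj u v) :
    (domGraph G S).Connected := by
  obtain ⟨v⟩ := hconn.nonempty
  obtain ⟨u, hu, -⟩ := exists_mem_dist_le_one_of_dominating hdom v
  have : Nonempty S := ⟨⟨u, hu⟩⟩
  refine ⟨fun s t => ?_⟩
  obtain ⟨p⟩ := hconn s t
  exact domGraph_reachable_of_walk hconn hdom p t.2 (by simp)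

/-- If `G` is a finite connected graph and `S` a dominating set,
then the graph `G_S` (vertices of `S`, edges between vertices at
`G`-distance at most 3) is connected. -/
theorem stmt2 {V : Type*} [Fintype V] (G : SimpleGraph V) (hconn : G.Connected)
    (S : Set V) (hdom : ∀ v : V, v ∈ S ∨ ∃ u ∈ S, G.Adj u v) :
    (domGraph G S).Connected :=
  stmt2_general G hconn S hdom
end

section
/- Let G be a finite connected graph and S a nonempty dominating set. Then there exists a connected dominating set S' ⊇ S of G with |S'| ≤ 3|S| - 2. (One can connect the nodes of S by at most |S|-1 paths each of length at most 3, adding at most 2 internal vertices per path.) -/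
/-!
Grow a connected set `T` from one vertex of `S`, keeping `|T| + 2 ≤ 3 |S ∩ T|`. While `S ⊄ T`,
pick `t ∈ T` and `s ∈ S \ T` at minimal distance `d`; then `d ≤ 3`, since otherwise the third
vertex `w` of a shortest `t`–`s` path is dominated by some `s' ∈ S`, and either `s' ∈ T` is
closer to `s` or `s' ∉ T` is closer to `t`. Adding the at most three new vertices of that path
to `T` gains at least one vertex of `S`.
-/

open Finset

namespace SimpleGraph

variable {V : Type*} {G : SimpleGraph V}

theorem Connected.exists_dist_le_three_of_dominating [DecidableEq V] (hconn : G.Connected)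
    {S T : Finset V} (hdom : ∀ v : V, v ∈ S ∨ ∃ u ∈ S, G.Adj u v) (hT : T.Nonempty)
    (hST : ¬S ⊆ T) : ∃ t ∈ T, ∃ s ∈ S \ T, G.dist t s ≤ 3 := by
  obtain ⟨⟨t, s⟩, hts, hmin⟩ :=
    (T ×ˢ (S \ T)).exists_min_image (fun x => G.dist x.1 x.2)
      (hT.product (sdiff_nonempty.mpr hST))
  simp only [mem_product] at hts hmin
  refine ⟨t, hts.1, s, hts.2, ?_⟩
  by_contra! hfar
  obtain ⟨p, hp⟩ := hconn.exists_walk_length_eq_dist t s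
  have htw : G.dist t (p.getVert 2) ≤ 2 := (dist_le (p.take 2)).trans (by simp)
  have hws : G.dist (p.getVert 2) s ≤ G.dist t s - 2 := (dist_le (p.drop 2)).trans (by simp [hp])
  obtain ⟨s', hs', hs'w⟩ : ∃ s' ∈ S, G.dist s' (p.getVert 2) ≤ 1 := by
    rcases hdom (p.getVert 2) with hw | ⟨u, hu, hadj⟩
    · exact ⟨_, hw, by simp⟩
    · exact ⟨u, hu, (dist_le hadj.toWalk).trans (by simp)⟩
  by_cases hs'T : s' ∈ T
  · have : G.dist t s ≤ G.dist s' s := hmin (s', s) ⟨hs'T, hts.2⟩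
    have := hconn.dist_triangle (u := s') (v := p.getVert 2) (w := s)
    omega
  · have : G.dist t s ≤ G.dist t s' := hmin (t, s') ⟨hts.1, mem_sdiff.mpr ⟨hs', hs'T⟩⟩
    have := hconn.dist_triangle (u := t) (v := p.getVert 2) (w := s')
    rw [dist_comm] at hs'w
    omega

theorem Connected.induce_union_support [DecidableEq V] {T : Finset V}
    (hT : (G.induce (T : Set V)).Connected) {t s : V} (ht : t ∈ T) (p : G.Walk t s) :
    (G.induce ((T ∪ p.support.toFinset : Finset V) : Set V)).Connected := by
  rw [coe_union, List.coe_toFinset]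
  exact induce_union_connected hT.preconnected p.connected_induce_support.preconnected
    ⟨t, ht, p.start_mem_support⟩

theorem Walk.card_union_support_le [DecidableEq V] {T : Finset V} {t s : V}
    (p : G.Walk t s) (ht : t ∈ T) : #(T ∪ p.support.toFinset) ≤ #T + p.length := by
  have hsub : T ∪ p.support.toFinset ⊆ T ∪ p.support.tail.toFinset := by
    nth_rw 1 [← p.cons_tail_support]
    rw [List.toFinset_cons, union_insert, insert_eq_of_mem (mem_union_left _ ht)]
  calc #(T ∪ p.support.toFinset) ≤ #(T ∪ p.support.tail.toFinset) := card_le_card hsub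
    _ ≤ #T + #p.support.tail.toFinset := card_union_le _ _
    _ ≤ #T + p.support.tail.length := by gcongr; exact List.toFinset_card_le _
    _ = #T + p.length := by simp

theorem Connected.exists_connected_superset_card_le [DecidableEq V] (hconn : G.Connected)
    {S : Finset V} (hdom : ∀ v : V, v ∈ S ∨ ∃ u ∈ S, G.Adj u v) (T : Finset V)
    (hT : (G.induce (T : Set V)).Connected) (hcard : #T + 2 ≤ 3 * #(S ∩ T)) :
    ∃ S' : Finset V, S ⊆ S' ∧ (G.induce (S' : Set V)).Connected ∧ #S' + 2 ≤ 3 * #S := by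
  by_cases hST : S ⊆ T
  · exact ⟨T, hST, hT, by rwa [inter_eq_left.mpr hST] at hcard⟩
  obtain ⟨t, ht, s, hs, hts⟩ := hconn.exists_dist_le_three_of_dominating hdom
    (coe_nonempty.mp (Set.nonempty_coe_sort.mp hT.nonempty)) hST
  obtain ⟨p, hp⟩ := hconn.exists_walk_length_eq_dist t s
  rw [mem_sdiff] at hs
  have hsT' : s ∈ T ∪ p.support.toFinset := mem_union_right _ (by simp)
  have hgain : S ∩ T ⊂ S ∩ (T ∪ p.support.toFinset) :=
    (ssubset_iff_of_subset (inter_subset_inter_left subset_union_left)).mpr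
      ⟨s, mem_inter.mpr ⟨hs.1, hsT'⟩, fun h => hs.2 (mem_inter.mp h).2⟩
  have hshrink : S \ (T ∪ p.support.toFinset) ⊂ S \ T :=
    (ssubset_iff_of_subset (sdiff_subset_sdiff subset_rfl subset_union_left)).mpr
      ⟨s, mem_sdiff.mpr hs, fun h => (mem_sdiff.mp h).2 hsT'⟩
  have := p.card_union_support_le ht
  have := card_lt_card hgain
  exact hconn.exists_connected_superset_card_le hdom _ (hT.induce_union_support ht p) (by omega)
termination_by #(S \ T)
decreasing_by exact card_lt_card hshrink

end SimpleGraph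

theorem stmt4_general {V : Type*} (G : SimpleGraph V)
    (hconn : G.Connected) (S : Finset V) (hS : S.Nonempty)
    (hdom : ∀ v : V, v ∈ S ∨ ∃ u ∈ S, G.Adj u v) :
    ∃ S' : Finset V, S ⊆ S' ∧
      (∀ v : V, v ∈ S' ∨ ∃ u ∈ S', G.Adj u v) ∧
      (SimpleGraph.induce (↑S' : Set V) G).Connected ∧
      S'.card ≤ 3 * S.card - 2 := by
  classical
  obtain ⟨s₀, hs₀⟩ := hS
  have hs₀conn : (G.induce (({s₀} : Finset V) : Set V)).Connected := by
    rw [coe_singleton, SimpleGraph.induce_singleton_eq_top]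
    exact SimpleGraph.connected_top
  obtain ⟨S', hSS', hS'conn, hcard⟩ :=
    hconn.exists_connected_superset_card_le hdom {s₀} hs₀conn (by simp [hs₀])
  refine ⟨S', hSS', fun v => ?_, hS'conn, by omega⟩
  exact (hdom v).imp (@hSS' v) fun ⟨u, hu, huv⟩ => ⟨u, hSS' hu, huv⟩

/-- For a finite connected graph `G` and a nonempty dominating
set `S`, there exists a connected dominating set `S' ⊇ S` with
`|S'| ≤ 3|S| - 2`. -/
theorem stmt4 {V : Type*} [Fintype V] [DecidableEq V] (G : SimpleGraph V)
    (hconn : G.Connected) (S : Finset V) (hS : S.Nonempty)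
    (hdom : ∀ v : V, v ∈ S ∨ ∃ u ∈ S, G.Adj u v) :
    ∃ S' : Finset V, S ⊆ S' ∧
      (∀ v : V, v ∈ S' ∨ ∃ u ∈ S', G.Adj u v) ∧
      (SimpleGraph.induce (↑S' : Set V) G).Connected ∧
      S'.card ≤ 3 * S.card - 2 :=
  stmt4_general G hconn S hS hdom
end

section
/- Let G = (V,E) be a finite graph and S ⊆ V a dominating set. If u, v ∈ S and there is a path of length d between u and v in G, then there is a path of length at most d between u and v in the graph G_S (on vertex set S, edges between vertices at G-distance at most 3). -/
namespace SimpleGraph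

variable {V W : Type*} {G : SimpleGraph V}

theorem Walk.exists_length_le_of_eq_or_adj {H : SimpleGraph W} (f : V → W)
    (hf : ∀ x y, G.Adj x y → f x = f y ∨ H.Adj (f x) (f y)) {u v : V} (w : G.Walk u v) :
    ∃ q : H.Walk (f u) (f v), q.length ≤ w.length := by
  induction w with
  | nil => exact ⟨Walk.nil, le_rfl⟩
  | cons hxy w ih =>
    obtain ⟨q, hq⟩ := ih
    rcases hf _ _ hxy with heq | hadj
    · exact ⟨q.copy heq.symm rfl, by simp only [Walk.length_copy, Walk.length_cons]; omega⟩
    · exact ⟨Walk.cons hadj q, by simp only [Walk.length_cons]; omega⟩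

theorem exists_walk_length_le_one_of_eq_or_adj {a x : V} (h : a = x ∨ G.Adj a x) :
    ∃ p : G.Walk a x, p.length ≤ 1 := by
  rcases h with rfl | hax
  · exact ⟨Walk.nil, zero_le_one⟩
  · exact ⟨hax.toWalk, le_rfl⟩

theorem exists_dominator_map {S : Set V} (hdom : ∀ v : V, v ∈ S ∨ ∃ u ∈ S, G.Adj u v) :
    ∃ f : V → S, (∀ x (hx : x ∈ S), f x = ⟨x, hx⟩) ∧ ∀ x, (f x).1 = x ∨ G.Adj (f x) x := by
  classical
  choose! g hgS hgx using fun x (hx : x ∉ S) => (hdom x).resolve_left hx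
  refine ⟨fun x => if hx : x ∈ S then ⟨x, hx⟩ else ⟨g x, hgS x hx⟩, fun x hx => dif_pos hx,
    fun x => ?_⟩
  by_cases hx : x ∈ S
  · simp [hx]
  · simp [hx, hgx x hx]

end SimpleGraph

open SimpleGraph

section

variable {V : Type*} {G : SimpleGraph V} {S : Set V}

theorem domGraph_adj_of_walk {a b : S} (hab : a ≠ b) (p : G.Walk a b)
    (hp : p.length ≤ 3) : (domGraph G S).Adj a b :=
  ⟨hab, ⟨p⟩, (dist_le p).trans hp⟩

theorem domGraph_adj_of_adj {a b : S} {x y : V} (ha : a.1 = x ∨ G.Adj a x)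
    (hb : b.1 = y ∨ G.Adj b y) (hxy : G.Adj x y) : a = b ∨ (domGraph G S).Adj a b := by
  obtain ⟨p, hp⟩ := exists_walk_length_le_one_of_eq_or_adj ha
  obtain ⟨r, hr⟩ := exists_walk_length_le_one_of_eq_or_adj hb
  refine or_iff_not_imp_left.2 fun hab =>
    domGraph_adj_of_walk hab (p.append (.cons hxy r.reverse)) ?_
  simp only [Walk.length_append, Walk.length_cons, Walk.length_reverse]
  omega

end

theorem stmt12_general {V : Type*} (G : SimpleGraph V) (S : Set V)
    (hdom : ∀ v : V, v ∈ S ∨ ∃ u ∈ S, G.Adj u v)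
    (u v : V) (hu : u ∈ S) (hv : v ∈ S)
    (d : ℕ) (w : G.Walk u v) (hw : w.length = d) :
    ∃ q : (domGraph G S).Walk ⟨u, hu⟩ ⟨v, hv⟩, q.length ≤ d := by
  obtain ⟨f, hfS, hfdom⟩ := exists_dominator_map hdom
  obtain ⟨q, hq⟩ := w.exists_length_le_of_eq_or_adj f
    fun x y hxy => domGraph_adj_of_adj (hfdom x) (hfdom y) hxy
  exact ⟨q.copy (hfS u hu) (hfS v hv), by rw [Walk.length_copy]; omega⟩

/-- If `u, v ∈ S` for a dominating set `S` of a finite graph `G`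
and there is a walk of length `d` between `u` and `v` in `G`, then there is a
walk of length at most `d` between them in `G_S`. -/
theorem stmt12 {V : Type*} [Fintype V] (G : SimpleGraph V) (S : Set V)
    (hdom : ∀ v : V, v ∈ S ∨ ∃ u ∈ S, G.Adj u v)
    (u v : V) (hu : u ∈ S) (hv : v ∈ S)
    (d : ℕ) (w : G.Walk u v) (hw : w.length = d) :
    ∃ q : (domGraph G S).Walk ⟨u, hu⟩ ⟨v, hv⟩, q.length ≤ d :=
  stmt12_general G S hdom u v hu hv d w hw
end

section
/- Let Ω be a finite probability space, Z = ∑_{v∈V} Z_v a sum of nonnegative random variables over a finite index set V, and B a Bernoulli random variable such that Z_v is independent of B for all v outside a subset N ⊆ V. Suppose b ∈ {0,1} is chosen to minimize ∑_{v∈N} α̃_{v,b} where α̃_{v,b} ≥ E[Z_v | B = b] ≥ α̃_{v,b} − δ for some δ ≥ 0. Then E[Z | B = b] ≤ E[Z] + 2|N|δ. -/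
/-!
Rounding costs at most `δ` per index of `N` on each side, so on `N` the chosen branch `b` is within
`|N|δ` of the better branch, whose conditional mean is at most the unconditional one because `E[Z_N]`
is a convex combination of `E[Z_N | B = 0]` and `E[Z_N | B = 1]`. Off `N`, conditioning on `B`
changes nothing.
-/

open MeasureTheory ProbabilityTheory

namespace ProbabilityTheory

variable {Ω : Type*} {m : MeasurableSpace Ω} {μ : Measure Ω} {s : Set Ω}

theorem setIntegral_eq_measureReal_mul_integral_cond [IsFiniteMeasure μ] (f : Ω → ℝ) :
    ∫ ω in s, f ω ∂μ = μ.real s * ∫ ω, f ω ∂μ[|s] := by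
  rcases eq_or_ne (μ s) 0 with hs | hs
  · simp [Measure.restrict_eq_zero.2 hs, hs, measureReal_def]
  · rw [cond, integral_smul_measure, ENNReal.toReal_inv, smul_eq_mul, ← mul_assoc,
      measureReal_def, mul_inv_cancel₀ (ENNReal.toReal_ne_zero.2 ⟨hs, measure_ne_top μ s⟩),
      one_mul]

theorem le_integral_of_le_integral_cond_of_le_integral_cond_compl [IsProbabilityMeasure μ]
    {f : Ω → ℝ} {c : ℝ} (hs : MeasurableSet s) (hf : Integrable f μ)
    (hc : c ≤ ∫ ω, f ω ∂μ[|s]) (hc' : c ≤ ∫ ω, f ω ∂μ[|sᶜ]) : c ≤ ∫ ω, f ω ∂μ := by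
  have hsum := probReal_add_probReal_compl (μ := μ) hs
  rw [← integral_add_compl hs hf, setIntegral_eq_measureReal_mul_integral_cond,
    setIntegral_eq_measureReal_mul_integral_cond]
  have h1 := mul_le_mul_of_nonneg_left hc (measureReal_nonneg (μ := μ) (s := s))
  have h2 := mul_le_mul_of_nonneg_left hc' (measureReal_nonneg (μ := μ) (s := sᶜ))
  linear_combination h1 + h2 - c * hsum

end ProbabilityTheory

theorem Finset.sum_le_sum_add_card_mul_of_rounded_min {ι κ : Type*} (N : Finset ι)
    (E α : ι → κ → ℝ) {δ : ℝ} {b j : κ} (hb : ∀ v ∈ N, E v b ≤ α v b)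
    (hj : ∀ v ∈ N, α v j - δ ≤ E v j) (hmin : ∑ v ∈ N, α v b ≤ ∑ v ∈ N, α v j) :
    ∑ v ∈ N, E v b ≤ ∑ v ∈ N, E v j + N.card * δ :=
  calc ∑ v ∈ N, E v b ≤ ∑ v ∈ N, α v b := Finset.sum_le_sum hb
    _ ≤ ∑ v ∈ N, α v j := hmin
    _ ≤ ∑ v ∈ N, (E v j + δ) := Finset.sum_le_sum fun v hv => by linarith [hj v hv]
    _ = ∑ v ∈ N, E v j + N.card * δ := by
      rw [Finset.sum_add_distrib, Finset.sum_const, nsmul_eq_mul]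

theorem stmt15_general {V Ω : Type*} [Fintype V] [Fintype Ω] [MeasurableSpace Ω]
    [MeasurableSingletonClass Ω]
    (μ : Measure Ω) [IsProbabilityMeasure μ]
    (Z : V → Ω → ℝ)
    (B : Ω → ℝ) (hB01 : ∀ ω, B ω = 0 ∨ B ω = 1)
    (N : Finset V)
    (hindep : ∀ v ∉ N, ∀ j ∈ ({0, 1} : Set ℝ),
      ∫ ω, Z v ω ∂(μ[|{ω | B ω = j}]) = ∫ ω, Z v ω ∂μ)
    (δ : ℝ) (hδ : 0 ≤ δ) (αt : V → ℝ → ℝ)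
    (hα : ∀ v ∈ N, ∀ j ∈ ({0, 1} : Set ℝ),
      ∫ ω, Z v ω ∂(μ[|{ω | B ω = j}]) ≤ αt v j ∧
        αt v j - δ ≤ ∫ ω, Z v ω ∂(μ[|{ω | B ω = j}]))
    (b : ℝ) (hb : b ∈ ({0, 1} : Set ℝ))
    (hbmin : ∀ j ∈ ({0, 1} : Set ℝ), ∑ v ∈ N, αt v b ≤ ∑ v ∈ N, αt v j) :
    ∫ ω, ∑ v, Z v ω ∂(μ[|{ω | B ω = b}])
      ≤ (∫ ω, ∑ v, Z v ω ∂μ) + 2 * N.card * δ := by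
  classical
  set E : V → ℝ → ℝ := fun v j => ∫ ω, Z v ω ∂(μ[|{ω | B ω = j}])
  have hcompl : {ω | B ω = 0}ᶜ = {ω | B ω = 1} := by
    ext ω
    rcases hB01 ω with h | h <;> simp [h]
  have hround (j) (hj : j ∈ ({0, 1} : Set ℝ)) :
      ∑ v ∈ N, E v b - N.card * δ ≤ ∫ ω, ∑ v ∈ N, Z v ω ∂μ[|{ω | B ω = j}] := by
    rw [integral_finsetSum _ fun v _ => .of_finite]
    linarith [(N.sum_le_sum_add_card_mul_of_rounded_min E αt (fun v hv => (hα v hv b hb).1)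
      (fun v hv => (hα v hv j hj).2) (hbmin j hj))]
  have hN : ∑ v ∈ N, E v b - N.card * δ ≤ ∑ v ∈ N, ∫ ω, Z v ω ∂μ := by
    rw [← integral_finsetSum (μ := μ) _ fun v _ => .of_finite]
    refine le_integral_of_le_integral_cond_of_le_integral_cond_compl
      (Set.toFinite _).measurableSet .of_finite (hround 0 (by simp)) ?_
    rw [hcompl]
    exact hround 1 (by simp)
  have houtside : ∑ v ∈ Nᶜ, E v b = ∑ v ∈ Nᶜ, ∫ ω, Z v ω ∂μ :=
    Finset.sum_congr rfl fun v hv => hindep v (Finset.mem_compl.1 hv) b hb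
  rw [integral_finsetSum _ fun v _ => .of_finite, integral_finsetSum _ fun v _ => .of_finite,
    ← N.sum_add_sum_compl, ← N.sum_add_sum_compl, houtside]
  have : 0 ≤ (N.card : ℝ) * δ := by positivity
  linarith

/-- Derandomization step via conditional expectations with
rounded estimates. `Z = ∑ v, Z v` is a sum of nonnegative random variables,
`B` a Bernoulli random variable, and for `v ∉ N` the variable `Z v` is
independent of `B` (i.e. `E[Z_v | B = j] = E[Z_v]`). If `α̃ v j` approximates
`E[Z_v | B = j]` up to additive error `δ` from above, and `b ∈ {0,1}`
minimizes `∑_{v ∈ N} α̃ v b`, then `E[Z | B = b] ≤ E[Z] + 2|N|δ`. -/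
theorem stmt15 {V Ω : Type*} [Fintype V] [Fintype Ω] [MeasurableSpace Ω]
    [MeasurableSingletonClass Ω]
    (μ : Measure Ω) [IsProbabilityMeasure μ]
    (Z : V → Ω → ℝ) (hZ0 : ∀ v ω, 0 ≤ Z v ω)
    (B : Ω → ℝ) (hB01 : ∀ ω, B ω = 0 ∨ B ω = 1)
    (hpos : ∀ j ∈ ({0, 1} : Set ℝ), 0 < μ {ω | B ω = j})
    (N : Finset V)
    (hindep : ∀ v ∉ N, ∀ j ∈ ({0, 1} : Set ℝ),
      ∫ ω, Z v ω ∂(μ[|{ω | B ω = j}]) = ∫ ω, Z v ω ∂μ)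
    (δ : ℝ) (hδ : 0 ≤ δ) (αt : V → ℝ → ℝ)
    (hα : ∀ v ∈ N, ∀ j ∈ ({0, 1} : Set ℝ),
      ∫ ω, Z v ω ∂(μ[|{ω | B ω = j}]) ≤ αt v j ∧
        αt v j - δ ≤ ∫ ω, Z v ω ∂(μ[|{ω | B ω = j}]))
    (b : ℝ) (hb : b ∈ ({0, 1} : Set ℝ))
    (hbmin : ∀ j ∈ ({0, 1} : Set ℝ), ∑ v ∈ N, αt v b ≤ ∑ v ∈ N, αt v j) :
    ∫ ω, ∑ v, Z v ω ∂(μ[|{ω | B ω = b}])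
      ≤ (∫ ω, ∑ v, Z v ω ∂μ) + 2 * N.card * δ :=
  stmt15_general μ Z B hB01 N hindep δ hδ αt hα b hb hbmin
end
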